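/- arXiv:1005.5520 — 3 statements merged into one kernel-verified Lean document; each statement's English description precedes it below -/
import Mathlib

section
/- For positive integers x_1 ≥ x_2 ≥ ... ≥ x_n with Σ_{i=1}^n 2^{−x_i} ≥ 1, define lists L_i = {c ∈ ℤ : x_1 + 1 − x_i ≤ c ≤ x_1} for each i ∈ [n]. Then the discrete interval hypergraph H_n admits no unique-maximum coloring from L = {L_i}. -/
/-!
Rescale the weights to `w i = 2 ^ (x₁ + 1 - xᵢ)`, so that the lists give `w i ≤ 2 ^ C i` and
`w` is monotone. Splitting an interval `[a, b]` at its unique maximum `q` and recursing on both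
sides shows `∑_{[a,b]} w + w a ≤ 2 ^ (C q + 1)`: the extra term `w a` on the left part, and
`w q ≤ w (q + 1)` on the right part, exactly absorb the weight of `q`. Since all colours are at
most `x₁`, this gives `∑ 2 ^ (-xᵢ) ≤ 1 - 2 ^ (-x₁) < 1`.
-/

open Finset

def IsUniqueMaxOn (C : ℕ → ℕ) (a b : ℕ) : Prop :=
  ∀ s t : ℕ, a ≤ s → s ≤ t → t ≤ b →
    ∃ v ∈ Finset.Icc s t, ∀ u ∈ Finset.Icc s t, u ≠ v → C u < C v

theorem IsUniqueMaxOn.mono {C : ℕ → ℕ} {a b a' b' : ℕ} (h : IsUniqueMaxOn C a b)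
    (ha : a ≤ a') (hb : b' ≤ b) : IsUniqueMaxOn C a' b' :=
  fun s t hs hst ht => h s t (ha.trans hs) hst (ht.trans hb)

theorem Nat.sum_Icc_eq_sum_Ico_add_add_sum_Ioc {M : Type*} [AddCommMonoid M] (f : ℕ → M)
    {a q b : ℕ} (haq : a ≤ q) (hqb : q ≤ b) :
    ∑ i ∈ Icc a b, f i = ∑ i ∈ Ico a q, f i + f q + ∑ i ∈ Ioc q b, f i := by
  have hsplit : Icc a b = Ico a q ∪ Icc q b := by
    ext; simp only [mem_union, mem_Icc, mem_Ico]; omega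
  have hdisj : Disjoint (Ico a q) (Icc q b) :=
    disjoint_left.2 fun i hi hi' => by simp only [mem_Icc, mem_Ico] at hi hi'; omega
  rw [hsplit, sum_union hdisj, Icc_eq_cons_Ioc hqb, sum_cons, add_assoc]

variable {R : Type*} [Semiring R] [PartialOrder R] [IsOrderedRing R]

theorem sum_add_le_two_pow_of_isUniqueMaxOn {w : ℕ → R} {C : ℕ → ℕ} {a b m : ℕ}
    (hab : a ≤ b) (hC : IsUniqueMaxOn C a b) (hw : MonotoneOn w (Set.Icc a b))
    (hwC : ∀ i ∈ Icc a b, w i ≤ 2 ^ C i) (hm : ∀ i ∈ Icc a b, C i < m) :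
    ∑ i ∈ Icc a b, w i + w a ≤ 2 ^ m := by
  obtain ⟨q, hq, hq_max⟩ := hC a b le_rfl hab le_rfl
  obtain ⟨haq, hqb⟩ := mem_Icc.1 hq
  have hleft : ∑ i ∈ Ico a q, w i + w a ≤ 2 ^ C q := by
    rcases haq.eq_or_lt with rfl | haq
    · simpa using hwC a hq
    · rw [show Ico a q = Icc a (q - 1) by ext; simp only [mem_Ico, mem_Icc]; omega]
      refine sum_add_le_two_pow_of_isUniqueMaxOn (by omega) (hC.mono le_rfl (by omega))
        (hw.mono (Set.Icc_subset_Icc le_rfl (by omega)))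
        (fun i hi => hwC i (Icc_subset_Icc le_rfl (by omega) hi))
        (fun i hi => hq_max i (Icc_subset_Icc le_rfl (by omega) hi) (by rw [mem_Icc] at hi; omega))
  have hright : ∑ i ∈ Ioc q b, w i + w q ≤ 2 ^ C q := by
    rcases hqb.eq_or_lt with rfl | hqb
    · simpa using hwC q hq
    · have hwq : w q ≤ w (q + 1) :=
        hw (Set.mem_Icc.2 ⟨haq, hqb.le⟩) (Set.mem_Icc.2 ⟨by omega, hqb⟩) (Nat.le_succ q)
      rw [show Ioc q b = Icc (q + 1) b by ext; simp only [mem_Ioc, mem_Icc]; omega]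
      refine (add_le_add le_rfl hwq).trans <|
        sum_add_le_two_pow_of_isUniqueMaxOn hqb (hC.mono (by omega) le_rfl)
        (hw.mono (Set.Icc_subset_Icc (by omega) le_rfl))
        (fun i hi => hwC i (Icc_subset_Icc (by omega) le_rfl hi))
        (fun i hi => hq_max i (Icc_subset_Icc (by omega) le_rfl hi) (by rw [mem_Icc] at hi; omega))
  calc ∑ i ∈ Icc a b, w i + w a
      = (∑ i ∈ Ico a q, w i + w a) + (∑ i ∈ Ioc q b, w i + w q) := by
        rw [Nat.sum_Icc_eq_sum_Ico_add_add_sum_Ioc w haq hqb]; abel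
    _ ≤ 2 ^ C q + 2 ^ C q := add_le_add hleft hright
    _ = 2 ^ (C q + 1) := by rw [pow_succ, mul_two]
    _ ≤ 2 ^ m := pow_le_pow_right₀ one_le_two (hm q hq)
termination_by b - a

theorem explicit_lists_no_um_coloring_general (n : ℕ) (hn : 1 ≤ n) (x : ℕ → ℕ)
    (hmono : ∀ i ∈ Finset.Icc 1 n, ∀ j ∈ Finset.Icc 1 n, i ≤ j → x j ≤ x i)
    (hsum : 1 ≤ ∑ i ∈ Finset.Icc 1 n, (2 : ℝ) ^ (-(x i : ℤ))) :
    ¬ ∃ C : ℕ → ℕ,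
      (∀ i ∈ Finset.Icc 1 n, C i ∈ Finset.Icc (x 1 + 1 - x i) (x 1)) ∧
      ∀ s t : ℕ, 1 ≤ s → s ≤ t → t ≤ n →
        ∃ v ∈ Finset.Icc s t, ∀ u ∈ Finset.Icc s t, u ≠ v → C u < C v := by
  rintro ⟨C, hC, hum⟩
  set w : ℕ → ℝ := fun i => 2 ^ ((x 1 : ℤ) + 1 - x i) with hw_def
  have hw : MonotoneOn w (Set.Icc 1 n) := fun i hi j hj hij =>
    zpow_le_zpow_right₀ one_le_two (by have := hmono i (mem_Icc.2 hi) j (mem_Icc.2 hj) hij; omega)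
  have hwC : ∀ i ∈ Icc 1 n, w i ≤ 2 ^ C i := fun i hi => by
    rw [← zpow_natCast]
    exact zpow_le_zpow_right₀ one_le_two (by have := (mem_Icc.1 (hC i hi)).1; omega)
  have hbound := sum_add_le_two_pow_of_isUniqueMaxOn (m := x 1 + 1) hn hum hw hwC
    fun i hi => Nat.lt_succ_of_le (mem_Icc.1 (hC i hi)).2
  have hsum_w :
      ∑ i ∈ Icc 1 n, w i = 2 ^ (x 1 + 1) * ∑ i ∈ Icc 1 n, (2 : ℝ) ^ (-(x i : ℤ)) := by
    rw [mul_sum]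
    refine sum_congr rfl fun i _ => ?_
    rw [hw_def, ← zpow_natCast, ← zpow_add₀ two_ne_zero]
    push_cast; ring_nf
  have hw_pos : 0 < w 1 := zpow_pos two_pos _
  rw [hsum_w] at hbound
  have := mul_le_mul_of_nonneg_left hsum (pow_pos two_pos (x 1 + 1)).le
  linarith

/-- For positive integers `x₁ ≥ … ≥ xₙ` with `∑ 2^{-xᵢ} ≥ 1`, the explicit lists
`L_i = {c : x₁ + 1 - x_i ≤ c ≤ x₁}` admit no unique-maximum coloring of the
discrete interval hypergraph `H_n`. -/
theorem explicit_lists_no_um_coloring (n : ℕ) (hn : 1 ≤ n) (x : ℕ → ℕ)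
    (hpos : ∀ i ∈ Finset.Icc 1 n, 0 < x i)
    (hmono : ∀ i ∈ Finset.Icc 1 n, ∀ j ∈ Finset.Icc 1 n, i ≤ j → x j ≤ x i)
    (hsum : 1 ≤ ∑ i ∈ Finset.Icc 1 n, (2 : ℝ) ^ (-(x i : ℤ))) :
    ¬ ∃ C : ℕ → ℕ,
      (∀ i ∈ Finset.Icc 1 n, C i ∈ Finset.Icc (x 1 + 1 - x i) (x 1)) ∧
      ∀ s t : ℕ, 1 ≤ s → s ≤ t → t ≤ n →
        ∃ v ∈ Finset.Icc s t, ∀ u ∈ Finset.Icc s t, u ≠ v → C u < C v :=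
  explicit_lists_no_um_coloring_general n hn x hmono hsum
end

section
/- For every finite hypergraph H, the unique-maximum choice number satisfies χ^um_ch(H) ≤ s(H), where s(H) is the least positive integer s with |E(H)| ≤ s(s−1)/2. -/
/-!
Induction on the number of edges, keeping for every vertex `v` lying in an edge the invariant
`|E| ≤ C(|L v|, 2)` or `deg v < |L v|`, which lists of size `s(H)` satisfy. Let `c` be the largest
colour in the lists of such vertices and `w` a vertex of maximum degree among those whose list
contains `c`. Colour `w` with `c`, delete the edges through `w`, and remove `c` from the lists of
the other vertices of those edges: `w` is then the unique maximum of every deleted edge. A vertex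
`v` losing `c` had `deg v ≤ deg w`, so if `deg v ≥ |L v|` the number of edges drops by at least
`|L v|`, which pays for `C(|L v|, 2) - C(|L v| - 1, 2) = |L v| - 1`; otherwise its degree drops
along with its list.
-/

/-- `sOf m` is the least positive integer `s` with `m ≤ s(s-1)/2`. -/
noncomputable def sOf (m : ℕ) : ℕ := sInf {s : ℕ | 0 < s ∧ m ≤ s * (s - 1) / 2}

open Finset

lemma succ_choose_two (l : ℕ) : (l + 1).choose 2 = l.choose 2 + l := by
  rw [Nat.choose_succ_succ' l 1, Nat.choose_one_right, add_comm]

lemma sOf_spec (m : ℕ) : 0 < sOf m ∧ m ≤ (sOf m).choose 2 := by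
  have h : sOf m ∈ {s : ℕ | 0 < s ∧ m ≤ s * (s - 1) / 2} := by
    refine Nat.sInf_mem ⟨m + 1, m.succ_pos, ?_⟩
    calc m ≤ (m + 1).choose 2 := succ_choose_two m ▸ m.le_add_left _
      _ = _ := Nat.choose_two_right _
  rw [Nat.choose_two_right]
  exact h

lemma choose_two_or_lt_mono {e e' l l' δ δ' : ℕ} (h : e ≤ l.choose 2 ∨ δ < l)
    (he : e' ≤ e) (hl : l ≤ l') (hδ : δ' ≤ δ) : e' ≤ l'.choose 2 ∨ δ' < l' := by
  have := Nat.choose_le_choose 2 hl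
  omega

lemma choose_two_or_lt_of_succ {e e' l δ δ' d : ℕ} (h : e ≤ (l + 1).choose 2 ∨ δ < l + 1)
    (hδ' : δ' < δ) (hδd : δ ≤ d) (he : e' + d ≤ e) : e' ≤ l.choose 2 ∨ δ' < l := by
  rw [succ_choose_two] at h
  omega

def IsUniqueMaxColoring {V : Type*} (E : Finset (Finset V)) (C : V → ℕ) : Prop :=
  ∀ S ∈ E, S.Nonempty → ∃ v ∈ S, ∀ u ∈ S, u ≠ v → C u < C v

section

variable {V : Type*} [DecidableEq V]

def edgeDegree (E : Finset (Finset V)) (v : V) : ℕ := #{S ∈ E | v ∈ S}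

def HasLargeLists (E : Finset (Finset V)) (L : V → Finset ℕ) : Prop :=
  ∀ S ∈ E, ∀ v ∈ S, #E ≤ (#(L v)).choose 2 ∨ edgeDegree E v < #(L v)

def eraseColorNear (E : Finset (Finset V)) (L : V → Finset ℕ) (w : V) (c : ℕ) : V → Finset ℕ :=
  fun u => if ∃ S ∈ E, w ∈ S ∧ u ∈ S then (L u).erase c else L u

lemma eraseColorNear_subset (E : Finset (Finset V)) (L : V → Finset ℕ) (w : V) (c : ℕ) (u : V) :
    eraseColorNear E L w c u ⊆ L u := by
  unfold eraseColorNear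
  split_ifs
  exacts [erase_subset c (L u), Subset.rfl]

lemma eraseColorNear_of_mem {E : Finset (Finset V)} {L : V → Finset ℕ} {w u : V} (c : ℕ)
    {S : Finset V} (hS : S ∈ E) (hwS : w ∈ S) (huS : u ∈ S) :
    eraseColorNear E L w c u = (L u).erase c :=
  if_pos ⟨S, hS, hwS, huS⟩

lemma card_filter_notMem_add_edgeDegree (E : Finset (Finset V)) (w : V) :
    #{S ∈ E | w ∉ S} + edgeDegree E w = #E := by
  rw [add_comm]
  exact card_filter_add_card_filter_not _

lemma edgeDegree_filter_notMem_le (E : Finset (Finset V)) (w v : V) :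
    edgeDegree {S ∈ E | w ∉ S} v ≤ edgeDegree E v :=
  card_le_card (filter_subset_filter _ (filter_subset _ E))

lemma edgeDegree_filter_notMem_lt {E : Finset (Finset V)} {T : Finset V} {w v : V}
    (hT : T ∈ E) (hwT : w ∈ T) (hvT : v ∈ T) :
    edgeDegree {S ∈ E | w ∉ S} v < edgeDegree E v := by
  refine card_lt_card ⟨filter_subset_filter _ (filter_subset _ E), fun h => ?_⟩
  exact (mem_filter.mp (mem_filter.mp (h (mem_filter.mpr ⟨hT, hvT⟩))).1).2 hwT

lemma two_le_card_of_hasLargeLists {E : Finset (Finset V)} {L : V → Finset ℕ}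
    (hL : HasLargeLists E L) {S : Finset V} (hS : S ∈ E) {v : V} (hv : v ∈ S) :
    2 ≤ #(L v) := by
  have hE : 1 ≤ #E := card_pos.mpr ⟨S, hS⟩
  have hdeg : 1 ≤ edgeDegree E v := card_pos.mpr ⟨S, mem_filter.mpr ⟨hS, hv⟩⟩
  rcases hL S hS v hv with h | h
  · by_contra! hlt
    rw [Nat.choose_eq_zero_of_lt hlt] at h
    omega
  · omega

lemma eraseColorNear_nonempty {E : Finset (Finset V)} {L : V → Finset ℕ}
    (hL : HasLargeLists E L) (hne : ∀ v, (L v).Nonempty) (w : V) (c : ℕ) (v : V) :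
    (eraseColorNear E L w c v).Nonempty := by
  unfold eraseColorNear
  split_ifs with hnear
  · obtain ⟨S, hS, -, hvS⟩ := hnear
    have := two_le_card_of_hasLargeLists hL hS hvS
    have := pred_card_le_card_erase (s := L v) (a := c)
    exact card_pos.mp (by omega)
  · exact hne v

lemma hasLargeLists_eraseColorNear {E : Finset (Finset V)} {L : V → Finset ℕ} {w : V} {c : ℕ}
    (hL : HasLargeLists E L)
    (hw : ∀ S ∈ E, ∀ u ∈ S, c ∈ L u → edgeDegree E u ≤ edgeDegree E w) :
    HasLargeLists {S ∈ E | w ∉ S} (eraseColorNear E L w c) := by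
  intro S hS v hv
  have hSE : S ∈ E := (mem_filter.mp hS).1
  have hcard := card_filter_notMem_add_edgeDegree E w
  have hinv := hL S hSE v hv
  by_cases hnear : ∃ T ∈ E, w ∈ T ∧ v ∈ T
  · obtain ⟨T, hT, hwT, hvT⟩ := hnear
    have hdeg := edgeDegree_filter_notMem_lt hT hwT hvT
    rw [eraseColorNear_of_mem c hT hwT hvT]
    by_cases hc : c ∈ L v
    · obtain ⟨l, hl⟩ : ∃ l, #(L v) = l + 1 := Nat.exists_eq_add_one.mpr (card_pos.mpr ⟨c, hc⟩)
      rw [card_erase_of_mem hc, hl, Nat.add_sub_cancel]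
      rw [hl] at hinv
      exact choose_two_or_lt_of_succ hinv hdeg (hw S hSE v hv hc) hcard.le
    · rw [erase_eq_of_notMem hc]
      exact choose_two_or_lt_mono hinv (card_filter_le _ _) le_rfl hdeg.le
  · rw [eraseColorNear, if_neg hnear]
    exact choose_two_or_lt_mono hinv (card_filter_le _ _) le_rfl
      (edgeDegree_filter_notMem_le E w v)

lemma IsUniqueMaxColoring.update {E : Finset (Finset V)} {C : V → ℕ} {w : V} {c : ℕ}
    (hC : IsUniqueMaxColoring {S ∈ E | w ∉ S} C)
    (hlt : ∀ S ∈ E, w ∈ S → ∀ u ∈ S, u ≠ w → C u < c) :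
    IsUniqueMaxColoring E (Function.update C w c) := by
  intro S hS hne
  by_cases hwS : w ∈ S
  · refine ⟨w, hwS, fun u hu huw => ?_⟩
    simpa [huw] using hlt S hS hwS u hu huw
  · obtain ⟨v, hv, hmax⟩ := hC S (mem_filter.mpr ⟨hS, hwS⟩) hne
    have hne : ∀ u ∈ S, u ≠ w := fun u hu h => hwS (h ▸ hu)
    refine ⟨v, hv, fun u hu huv => ?_⟩
    simpa [Function.update_of_ne (hne u hu), Function.update_of_ne (hne v hv)] using
      hmax u hu huv

lemma exists_maxColor_maxDegree {E : Finset (Finset V)} {L : V → Finset ℕ} {S₀ : Finset V}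
    (hS₀ : S₀ ∈ E) {v₀ : V} (hv₀ : v₀ ∈ S₀) (hL : (L v₀).Nonempty) :
    ∃ w c, (∃ S ∈ E, w ∈ S) ∧ c ∈ L w ∧ (∀ S ∈ E, ∀ u ∈ S, ∀ x ∈ L u, x ≤ c) ∧
      ∀ S ∈ E, ∀ u ∈ S, c ∈ L u → edgeDegree E u ≤ edgeDegree E w := by
  set W := E.biUnion id
  have hv₀W : v₀ ∈ W := mem_biUnion.mpr ⟨S₀, hS₀, hv₀⟩
  have hcolors : (W.biUnion L).Nonempty := hL.mono (subset_biUnion_of_mem L hv₀W)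
  set c := (W.biUnion L).max' hcolors
  obtain ⟨u₀, hu₀W, hcu₀⟩ := mem_biUnion.mp ((W.biUnion L).max'_mem hcolors)
  obtain ⟨w, hwA, hw_max⟩ := exists_max_image {u ∈ W | c ∈ L u} (edgeDegree E)
    ⟨u₀, mem_filter.mpr ⟨hu₀W, hcu₀⟩⟩
  obtain ⟨hwW, hcw⟩ := mem_filter.mp hwA
  refine ⟨w, c, by simpa [W] using hwW, hcw, fun S hS u hu x hx => ?_, fun S hS u hu hcu => ?_⟩
  · exact le_max' _ x (mem_biUnion.mpr ⟨u, mem_biUnion.mpr ⟨S, hS, hu⟩, hx⟩)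
  · exact hw_max u (mem_filter.mpr ⟨mem_biUnion.mpr ⟨S, hS, hu⟩, hcu⟩)

theorem exists_uniqueMaxColoring_of_hasLargeLists (E : Finset (Finset V)) (L : V → Finset ℕ)
    (hne : ∀ v, (L v).Nonempty) (hL : HasLargeLists E L) :
    ∃ C : V → ℕ, (∀ v, C v ∈ L v) ∧ IsUniqueMaxColoring E C := by
  induction hE : #E using Nat.strong_induction_on generalizing E L with
  | _ n ih =>
    by_cases hedge : ∃ S ∈ E, S.Nonempty
    swap
    · choose C hC using hne
      exact ⟨C, hC, fun S hS h => absurd ⟨S, hS, h⟩ hedge⟩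
    obtain ⟨S₀, hS₀, v₀, hv₀⟩ := hedge
    obtain ⟨w, c, ⟨Sw, hSw, hwSw⟩, hcw, hc_max, hw_max⟩ :=
      exists_maxColor_maxDegree hS₀ hv₀ (hne v₀)
    have hsmaller : #{S ∈ E | w ∉ S} < n := by
      have := card_filter_notMem_add_edgeDegree E w
      have : 0 < edgeDegree E w := card_pos.mpr ⟨Sw, mem_filter.mpr ⟨hSw, hwSw⟩⟩
      omega
    obtain ⟨C, hCL, hC⟩ := ih _ hsmaller _ (eraseColorNear E L w c)
      (eraseColorNear_nonempty hL hne w c) (hasLargeLists_eraseColorNear hL hw_max) rfl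
    refine ⟨Function.update C w c, fun v => ?_, hC.update fun S hS hwS u hu huw => ?_⟩
    · rcases eq_or_ne v w with rfl | hvw
      · simpa using hcw
      · simpa [hvw] using eraseColorNear_subset E L w c v (hCL v)
    · have hCu := hCL u
      rw [eraseColorNear_of_mem c hS hwS hu] at hCu
      exact lt_of_le_of_ne (hc_max S hS u hu _ (mem_of_mem_erase hCu)) (ne_of_mem_erase hCu)

end

theorem um_choice_le_s_general {V : Type}
    (E : Finset (Finset V)) (L : V → Finset ℕ)
    (hsize : ∀ v : V, sOf E.card ≤ (L v).card) :
    ∃ C : V → ℕ, (∀ v, C v ∈ L v) ∧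
      ∀ S ∈ E, S.Nonempty → ∃ v ∈ S, ∀ u ∈ S, u ≠ v → C u < C v := by
  classical
  obtain ⟨hs_pos, hs⟩ := sOf_spec #E
  refine exists_uniqueMaxColoring_of_hasLargeLists E L
    (fun v => card_pos.mp (hs_pos.trans_le (hsize v))) fun S _ v _ => Or.inl ?_
  exact hs.trans (Nat.choose_le_choose 2 (hsize v))

/-- The unique-maximum choice number of a finite hypergraph is at most `s(H)`:
for every family of lists (of positive integers) each of size at least `s(H)`,
`H` admits a unique-maximum coloring from the lists. -/
theorem um_choice_le_s {V : Type} [Fintype V] [DecidableEq V]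
    (E : Finset (Finset V)) (L : V → Finset ℕ)
    (hpos : ∀ v : V, ∀ c ∈ L v, 0 < c)
    (hsize : ∀ v : V, sOf E.card ≤ (L v).card) :
    ∃ C : V → ℕ, (∀ v, C v ∈ L v) ∧
      ∀ S ∈ E, S.Nonempty → ∃ v ∈ S, ∀ u ∈ S, u ≠ v → C u < C v :=
  um_choice_le_s_general E L hsize
end

section
/- For every hypergraph H with n vertices, the conflict-free choice number satisfies ch_cf(H) ≤ χ_cf(H)·ln n + 1. -/
/-!
Fix a conflict-free colouring `c` with `χ` colours and lists of size `k`. Send every colour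
occurring in the lists to one of the `χ` colours uniformly at random; a vertex `v` is bad if no
colour of its list is sent to `c v`, which happens with probability `(1 - 1/χ)^k < e^(-k/χ)`.
For `k > χ ln n` the union bound leaves a map with no bad vertex, and choosing for each `v` a
list colour sent to `c v` gives a list colouring that refines `c`, hence is conflict-free.
-/

open Finset

section Counting

variable {ι α : Type*} [Fintype ι] [DecidableEq ι] [Fintype α] [DecidableEq α]

theorem card_filter_forall_mem_ne (T : Finset ι) (a : α) :
    #{f : ι → α | ∀ i ∈ T, f i ≠ a} =
      (Fintype.card α - 1) ^ #T * Fintype.card α ^ (Fintype.card ι - #T) := by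
  have hpi : ({f : ι → α | ∀ i ∈ T, f i ≠ a} : Finset (ι → α)) =
      Fintype.piFinset fun i => if i ∈ T then {a}ᶜ else univ := by
    ext f
    simp only [mem_filter, mem_univ, true_and, Fintype.mem_piFinset]
    refine forall_congr' fun i => ?_
    split_ifs <;> simp [*]
  rw [hpi, Fintype.card_piFinset]
  simp only [apply_ite card, card_compl, card_singleton, card_univ]
  rw [prod_ite, prod_const, prod_const, filter_mem_eq_inter, univ_inter, filter_not,
    filter_mem_eq_inter, univ_inter, card_sdiff_of_subset (subset_univ T), card_univ]

theorem exists_forall_exists_mem_eq {V : Type*} [Fintype V] [Nonempty V] {k : ℕ}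
    (T : V → Finset ι) (a : V → α) (hT : ∀ v, #(T v) = k)
    (hcount : Fintype.card V * (Fintype.card α - 1) ^ k < Fintype.card α ^ k) :
    ∃ f : ι → α, ∀ v, ∃ i ∈ T v, f i = a v := by
  obtain ⟨v₀⟩ := ‹Nonempty V›
  have hk : k ≤ Fintype.card ι := hT v₀ ▸ card_le_univ (T v₀)
  have hα : 0 < Fintype.card α := Fintype.card_pos_iff.mpr ⟨a v₀⟩
  by_contra! hbad
  have hcover : (univ : Finset (ι → α)) ⊆ univ.biUnion fun v => {f | ∀ i ∈ T v, f i ≠ a v} :=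
    fun f _ => by simpa using hbad f
  have hle := (card_le_card hcover).trans card_biUnion_le
  simp only [card_filter_forall_mem_ne, hT, sum_const, card_univ, Fintype.card_fun,
    smul_eq_mul] at hle
  have hsplit : Fintype.card α ^ Fintype.card ι =
      Fintype.card α ^ k * Fintype.card α ^ (Fintype.card ι - k) := by
    rw [← pow_add, Nat.add_sub_cancel' hk]
  rw [hsplit, ← mul_assoc] at hle
  exact hcount.not_ge (Nat.le_of_mul_le_mul_right hle (by positivity))

end Counting

theorem exists_mem_lists_refining {V α β : Type*} [Fintype V] [Nonempty V] [Fintype α]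
    {k : ℕ} (c : V → α) (L : V → Finset β) (hL : ∀ v, k ≤ #(L v))
    (hcount : Fintype.card V * (Fintype.card α - 1) ^ k < Fintype.card α ^ k) :
    ∃ C : V → β, (∀ v, C v ∈ L v) ∧ ∀ u v, C u = C v → c u = c v := by
  classical
  choose L' hL'L hL'card using fun v => exists_subset_card_eq (hL v)
  set A := univ.biUnion L'
  have hL'A : ∀ v, L' v ⊆ A := fun v => subset_biUnion_of_mem L' (mem_univ v)
  obtain ⟨f, hf⟩ := exists_forall_exists_mem_eq (fun v => (L' v).subtype (· ∈ A)) c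
    (fun v => by rw [card_subtype, filter_true_of_mem (hL'A v), hL'card]) hcount
  choose i hi hfi using hf
  refine ⟨fun v => i v, fun v => hL'L v (by simpa using hi v), fun u v huv => ?_⟩
  rw [← hfi u, ← hfi v, Subtype.ext huv]

section ConflictFree

variable {V α β : Type*}

def IsConflictFree (E : Finset (Finset V)) (C : V → α) : Prop :=
  ∀ S ∈ E, S.Nonempty → ∃ v ∈ S, ∀ u ∈ S, u ≠ v → C u ≠ C v

theorem IsConflictFree.of_refines {E : Finset (Finset V)} {c : V → α} {C : V → β}
    (hc : IsConflictFree E c) (hC : ∀ u v, C u = C v → c u = c v) : IsConflictFree E C :=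
  fun S hS hne => (hc S hS hne).imp fun _ ⟨hv, huniq⟩ =>
    ⟨hv, fun u hu hne h => huniq u hu hne (hC u _ h)⟩

variable (E : Finset (Finset V))

noncomputable def cfChromaticNumber : ℕ :=
  sInf {k | ∃ C : V → ℕ, (∀ v, C v ∈ Icc 1 k) ∧ IsConflictFree E C}

noncomputable def cfChoiceNumber : ℕ :=
  sInf {k | ∀ L : V → Finset ℕ, (∀ v, k ≤ #(L v)) →
    ∃ C : V → ℕ, (∀ v, C v ∈ L v) ∧ IsConflictFree E C}

theorem exists_isConflictFree_Icc_cfChromaticNumber [Fintype V] :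
    ∃ C : V → ℕ, (∀ v, C v ∈ Icc 1 (cfChromaticNumber E)) ∧ IsConflictFree E C := by
  refine Nat.sInf_mem (s := {k | ∃ C : V → ℕ, (∀ v, C v ∈ Icc 1 k) ∧ IsConflictFree E C})
    ⟨Fintype.card V, fun v => Fintype.equivFin V v + 1, fun v => ?_, ?_⟩
  · simp
  · exact fun S _ ⟨v, hv⟩ => ⟨v, hv, fun u _ huv h =>
      huv ((Fintype.equivFin V).injective (Fin.ext (Nat.add_right_cancel h)))⟩

theorem cfChoiceNumber_eq_zero_of_isEmpty [IsEmpty V] : cfChoiceNumber E = 0 :=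
  Nat.sInf_eq_zero.mpr <| .inl fun _ _ =>
    ⟨isEmptyElim, isEmptyElim, fun _ _ h => isEmptyElim h.choose⟩

theorem cfChoiceNumber_le_of_isConflictFree [Fintype V] [Nonempty V] [Fintype α] {c : V → α}
    (hc : IsConflictFree E c) {k : ℕ}
    (hcount : Fintype.card V * (Fintype.card α - 1) ^ k < Fintype.card α ^ k) :
    cfChoiceNumber E ≤ k :=
  Nat.sInf_le fun L hL =>
    let ⟨C, hCL, hCc⟩ := exists_mem_lists_refining c L hL hcount
    ⟨C, hCL, hc.of_refines hCc⟩

end ConflictFree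

theorem card_mul_sub_one_pow_lt_pow {n χ k : ℕ} (hχ : 0 < χ) (hk : χ * Real.log n < k) :
    n * (χ - 1) ^ k < χ ^ k := by
  rcases Nat.eq_zero_or_pos n with rfl | hn
  · simpa using pow_pos hχ k
  have hχ' : (0 : ℝ) < χ := by exact_mod_cast hχ
  have hn' : (0 : ℝ) < n := by exact_mod_cast hn
  have hstep : (χ : ℝ) - 1 ≤ χ * Real.exp (-1 / χ) := by
    calc (χ : ℝ) - 1 = χ * (-1 / χ + 1) := by field_simp; ring
      _ ≤ χ * Real.exp (-1 / χ) := by gcongr; exact Real.add_one_le_exp _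
  have hexp : Real.exp (-(k / χ)) < Real.exp (-Real.log n) := by
    rw [Real.exp_lt_exp, neg_lt_neg_iff, lt_div_iff₀ hχ', mul_comm]
    exact hk
  suffices (n : ℝ) * ((χ - 1 : ℕ) : ℝ) ^ k < (χ : ℝ) ^ k by exact_mod_cast this
  calc (n : ℝ) * ((χ - 1 : ℕ) : ℝ) ^ k
      ≤ n * (χ * Real.exp (-1 / χ)) ^ k := by
        rw [Nat.cast_sub hχ, Nat.cast_one]
        gcongr
        linarith [(by exact_mod_cast hχ : (1 : ℝ) ≤ χ)]
    _ = χ ^ k * (n * Real.exp (-(k / χ))) := by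
        rw [mul_pow, ← Real.exp_nat_mul]
        ring_nf
    _ < χ ^ k * (n * Real.exp (-Real.log n)) := by gcongr
    _ = χ ^ k := by rw [Real.exp_neg, Real.exp_log hn', mul_inv_cancel₀ hn'.ne', mul_one]

theorem cf_choice_le_cf_chromatic_mul_log_general {V : Type} [Fintype V]
    (E : Finset (Finset V)) :
    ((sInf {k : ℕ | ∀ L : V → Finset ℕ, (∀ v, k ≤ (L v).card) →
        ∃ C : V → ℕ, (∀ v, C v ∈ L v) ∧
          ∀ S ∈ E, S.Nonempty → ∃ v ∈ S, ∀ u ∈ S, u ≠ v → C u ≠ C v} : ℕ) : ℝ)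
      ≤ ((sInf {k : ℕ | ∃ C : V → ℕ, (∀ v, C v ∈ Finset.Icc 1 k) ∧
          ∀ S ∈ E, S.Nonempty → ∃ v ∈ S, ∀ u ∈ S, u ≠ v → C u ≠ C v} : ℕ) : ℝ)
          * Real.log (Fintype.card V) + 1 := by
  change (cfChoiceNumber E : ℝ) ≤ cfChromaticNumber E * Real.log (Fintype.card V) + 1
  rcases isEmpty_or_nonempty V with _ | _
  · simp [cfChoiceNumber_eq_zero_of_isEmpty]
  set χ := cfChromaticNumber E
  set x := (χ : ℝ) * Real.log (Fintype.card V)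
  obtain ⟨c, hc_mem, hc⟩ := exists_isConflictFree_Icc_cfChromaticNumber E
  have hχ : 0 < χ := by
    have := mem_Icc.mp (hc_mem (Classical.arbitrary V))
    omega
  have hc' : IsConflictFree E fun v => (⟨c v, hc_mem v⟩ : Icc 1 χ) :=
    hc.of_refines fun _ _ h => congrArg Subtype.val h
  have hk : cfChoiceNumber E ≤ ⌊x⌋₊ + 1 := by
    refine cfChoiceNumber_le_of_isConflictFree E hc' ?_
    simpa using card_mul_sub_one_pow_lt_pow hχ (k := ⌊x⌋₊ + 1)
      (by push_cast; exact Nat.lt_floor_add_one x)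
  calc (cfChoiceNumber E : ℝ) ≤ ⌊x⌋₊ + 1 := by exact_mod_cast hk
    _ ≤ x + 1 := by
      gcongr
      exact Nat.floor_le (mul_nonneg χ.cast_nonneg (Real.log_natCast_nonneg _))

/-- For every hypergraph `H` with `n` vertices, the conflict-free choice number is
at most `χ_cf(H) · ln n + 1`. -/
theorem cf_choice_le_cf_chromatic_mul_log {V : Type} [Fintype V] [DecidableEq V]
    (E : Finset (Finset V)) :
    ((sInf {k : ℕ | ∀ L : V → Finset ℕ, (∀ v, k ≤ (L v).card) →
        ∃ C : V → ℕ, (∀ v, C v ∈ L v) ∧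
          ∀ S ∈ E, S.Nonempty → ∃ v ∈ S, ∀ u ∈ S, u ≠ v → C u ≠ C v} : ℕ) : ℝ)
      ≤ ((sInf {k : ℕ | ∃ C : V → ℕ, (∀ v, C v ∈ Finset.Icc 1 k) ∧
          ∀ S ∈ E, S.Nonempty → ∃ v ∈ S, ∀ u ∈ S, u ≠ v → C u ≠ C v} : ℕ) : ℝ)
          * Real.log (Fintype.card V) + 1 :=
  cf_choice_le_cf_chromatic_mul_log_general E
end
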